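/- arXiv:2210.07843 — 4 statements merged into one kernel-verified Lean document; each statement's English description precedes it below -/
import Mathlib

section
/- Let e ≥ 1, let b₁,…,b_e and c₁,…,c_e be elements of a commutative ring, and let M, N be natural numbers. Then the coefficient of the multilinear monomial t₁t₂⋯t_e in the polynomial (1 + b₁t₁ + ⋯ + b_e t_e)^M · (1 + c₁t₁ + ⋯ + c_e t_e)^N equals the sum over all subsets S of {1,…,e} of (M)_{|S|} · (N)_{e−|S|} · ∏_{i∈S} b_i · ∏_{i∉S} c_i, where (x)_k = x(x−1)⋯(x−k+1) denotes the falling factorial. -/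
/-!
Write `[T] p` for the coefficient of `∏_{i∈T} tᵢ` in `p`. Such a monomial of `p * q` only arises as
`∏_{i∈S} tᵢ · ∏_{i∈T∖S} tᵢ`, so `[T] (p * q) = ∑_{S ⊆ T} [S] p · [T∖S] q`. For `ℓ = ∑ fᵢtᵢ`,
multiplying by `1 + ℓ` gives `[T] (1 + ℓ)^(M+1) = [T] (1 + ℓ)^M + ∑_{i∈T} fᵢ · [T∖i] (1 + ℓ)^M`,
which matches the recursion `(M+1)_k = (M)_k + k (M)_(k-1)`; hence `[T] (1 + ℓ)^M = (M)_|T| ∏_T fᵢ`.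
-/

open MvPolynomial Finset

theorem Nat.succ_descFactorial_eq_add (n k : ℕ) :
    (n + 1).descFactorial k = n.descFactorial k + k * n.descFactorial (k - 1) := by
  cases k with
  | zero => simp
  | succ k =>
    rw [Nat.succ_descFactorial_succ, Nat.descFactorial_succ, Nat.add_sub_cancel, ← add_mul]
    rcases le_or_gt k n with h | h
    · congr 1; omega
    · simp [Nat.descFactorial_eq_zero_iff_lt.mpr h]

section SquarefreeExponent

variable {σ : Type*} [DecidableEq σ]

theorem Finsupp.sum_single_one_apply (T : Finset σ) (j : σ) :
    (∑ i ∈ T, Finsupp.single i 1 : σ →₀ ℕ) j = if j ∈ T then 1 else 0 := by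
  simp [Finsupp.finsetSum_apply, Finsupp.single_apply]

theorem Finsupp.support_sum_single_one (T : Finset σ) :
    (∑ i ∈ T, Finsupp.single i 1 : σ →₀ ℕ).support = T := by
  ext j
  simp [Finsupp.sum_single_one_apply]

theorem Finsupp.sum_single_one_support {m : σ →₀ ℕ} (hm : ∀ j, m j ≤ 1) :
    ∑ i ∈ m.support, Finsupp.single i 1 = m := by
  ext j
  have := hm j
  rw [Finsupp.sum_single_one_apply]
  split_ifs with h <;> simp at h <;> omega

theorem Finsupp.sum_single_one_sdiff {S T : Finset σ} (h : S ⊆ T) :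
    ∑ i ∈ T \ S, Finsupp.single i 1 = (∑ i ∈ T, Finsupp.single i 1 : σ →₀ ℕ) -
      ∑ i ∈ S, Finsupp.single i 1 :=
  eq_tsub_of_add_eq (sum_sdiff h)

end SquarefreeExponent

namespace MvPolynomial

variable {σ R : Type*} [CommRing R] [DecidableEq σ]

theorem coeff_sum_single_one_mul (T : Finset σ) (p q : MvPolynomial σ R) :
    coeff (∑ i ∈ T, Finsupp.single i 1) (p * q) =
      ∑ S ∈ T.powerset, coeff (∑ i ∈ S, Finsupp.single i 1) p *
        coeff (∑ i ∈ T \ S, Finsupp.single i 1) q := by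
  rw [coeff_mul]
  symm
  refine sum_nbij' (fun S => (∑ i ∈ S, Finsupp.single i 1, ∑ i ∈ T \ S, Finsupp.single i 1))
    (fun x => x.1.support) ?_ ?_ ?_ ?_ (fun _ _ => rfl)
  · intro S hS
    rw [HasAntidiagonal.mem_antidiagonal, add_comm]
    exact sum_sdiff (mem_powerset.mp hS)
  · intro x hx
    rw [HasAntidiagonal.mem_antidiagonal] at hx
    rw [mem_powerset, ← Finsupp.support_sum_single_one T, ← hx]
    exact Finsupp.support_mono le_self_add
  · intro S _
    simp [Finsupp.support_sum_single_one]
  · intro x hx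
    rw [HasAntidiagonal.mem_antidiagonal] at hx
    have hle : x.1 ≤ ∑ i ∈ T, Finsupp.single i 1 := hx ▸ le_self_add
    have hsub : x.1.support ⊆ T := Finsupp.support_sum_single_one T ▸ Finsupp.support_mono hle
    have h₁ : ∑ i ∈ x.1.support, Finsupp.single i 1 = x.1 :=
      Finsupp.sum_single_one_support fun j =>
        (hle j).trans (by rw [Finsupp.sum_single_one_apply]; split_ifs <;> simp)
    refine Prod.ext h₁ ?_
    rw [Finsupp.sum_single_one_sdiff hsub, h₁, ← hx, add_tsub_cancel_left]

theorem coeff_sum_single_one_mul_linear [Fintype σ] (T : Finset σ) (f : σ → R)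
    (p : MvPolynomial σ R) :
    coeff (∑ i ∈ T, Finsupp.single i 1) (p * ∑ i, C (f i) * X i) =
      ∑ i ∈ T, f i * coeff (∑ j ∈ T.erase i, Finsupp.single j 1) p := by
  simp_rw [mul_sum, mul_left_comm p, coeff_sum, coeff_C_mul, coeff_mul_X',
    Finsupp.support_sum_single_one, mul_ite, mul_zero, sum_ite_mem, univ_inter]
  refine sum_congr rfl fun i hi => ?_
  rw [← add_sum_erase T _ hi, add_tsub_cancel_left]

theorem coeff_sum_single_one_one_add_linear_pow [Fintype σ] (T : Finset σ) (f : σ → R)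
    (M : ℕ) :
    coeff (∑ i ∈ T, Finsupp.single i 1) ((1 + ∑ i, C (f i) * X i) ^ M) =
      (M.descFactorial T.card : R) * ∏ i ∈ T, f i := by
  induction M generalizing T with
  | zero =>
    rcases T.eq_empty_or_nonempty with rfl | hT
    · simp
    · have hne : ∑ i ∈ T, Finsupp.single i 1 ≠ 0 := fun h =>
        hT.ne_empty (by simpa [h] using (Finsupp.support_sum_single_one T).symm)
      rw [pow_zero, coeff_one, if_neg hne.symm,
        Nat.descFactorial_eq_zero_iff_lt.mpr hT.card_pos]
      simp
  | succ M ih =>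
    have hstep : ∀ i ∈ T, f i * coeff (∑ j ∈ T.erase i, Finsupp.single j 1)
        ((1 + ∑ i, C (f i) * X i) ^ M) = (M.descFactorial (T.card - 1) : R) * ∏ j ∈ T, f j := by
      intro i hi
      rw [ih, card_erase_of_mem hi, mul_left_comm, mul_prod_erase T f hi]
    rw [pow_succ, mul_one_add, coeff_add, coeff_sum_single_one_mul_linear, sum_congr rfl hstep,
      sum_const, nsmul_eq_mul, ih, Nat.succ_descFactorial_eq_add]
    push_cast
    ring

end MvPolynomial

theorem dJ_multilinear_coeff_general {R : Type*} [CommRing R] (e : ℕ)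
    (b c : Fin e → R) (M N : ℕ) :
    MvPolynomial.coeff (∑ i : Fin e, Finsupp.single i 1)
      (((1 + ∑ i : Fin e, C (b i) * X i) ^ M) *
       ((1 + ∑ i : Fin e, C (c i) * X i) ^ N) : MvPolynomial (Fin e) R)
    = ∑ S : Finset (Fin e),
        (Nat.descFactorial M S.card : R) * (Nat.descFactorial N (e - S.card) : R) *
          (∏ i ∈ S, b i) * (∏ i ∈ Sᶜ, c i) := by
  rw [coeff_sum_single_one_mul, powerset_univ]
  refine sum_congr rfl fun S _ => ?_
  rw [← compl_eq_univ_sdiff, coeff_sum_single_one_one_add_linear_pow,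
    coeff_sum_single_one_one_add_linear_pow, card_compl, Fintype.card_fin]
  ring

/-- The coefficient of the squarefree monomial `t₁⋯t_e` in
`(1 + ∑ bᵢtᵢ)^M * (1 + ∑ cᵢtᵢ)^N` is the sum over subsets `S` of
`(M)_{|S|} (N)_{e-|S|} ∏_{i∈S} bᵢ ∏_{i∉S} cᵢ`. -/
theorem dJ_multilinear_coeff {R : Type*} [CommRing R] (e : ℕ) (he : 1 ≤ e)
    (b c : Fin e → R) (M N : ℕ) :
    MvPolynomial.coeff (∑ i : Fin e, Finsupp.single i 1)
      (((1 + ∑ i : Fin e, C (b i) * X i) ^ M) *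
       ((1 + ∑ i : Fin e, C (c i) * X i) ^ N) : MvPolynomial (Fin e) R)
    = ∑ S : Finset (Fin e),
        (Nat.descFactorial M S.card : R) * (Nat.descFactorial N (e - S.card) : R) *
          (∏ i ∈ S, b i) * (∏ i ∈ Sᶜ, c i) :=
  dJ_multilinear_coeff_general e b c M N
end

section
/- Let g, r, d be natural numbers with d ≥ r + g. Then ∑_{m=0}^{r} C(g,m) · C(d−r−m, r−m) = ∑_{m=0}^{r} 2^m · C(g,m) · C(d−r−g, r−m). -/
/-!
Put `n = d - r`, so that `g ≤ n`. Both sides are the coefficient of `X ^ r` in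
`(1 + 2X) ^ g * (1 + X) ^ (n - g)`: the right side by multiplying out the two factors directly,
the left side after writing `1 + 2X = X + (1 + X)` and expanding binomially, which gives
`∑ₖ C(g,k) X ^ k (1 + X) ^ (n - k)`.
-/

open Finset Polynomial

theorem Finset.sum_range_succ_eq_sum_range_succ_of_eq_zero {M : Type*} [AddCommMonoid M]
    {f : ℕ → M} {a b : ℕ} (hf : ∀ k, min a b < k → f k = 0) :
    ∑ k ∈ range (a + 1), f k = ∑ k ∈ range (b + 1), f k := by
  have extend : ∀ c, min a b ≤ c →
      ∑ k ∈ range (min a b + 1), f k = ∑ k ∈ range (c + 1), f k := fun c hc =>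
    sum_subset (range_subset_range.2 (by omega)) fun k _ hk => hf k (by simp at hk; omega)
  rw [← extend a (min_le_left a b), extend b (min_le_right a b)]

theorem add_pow_mul_pow_sub {R : Type*} [CommSemiring R] (x y : R) {g n : ℕ} (hg : g ≤ n) :
    (x + y) ^ g * y ^ (n - g) = ∑ k ∈ range (g + 1), g.choose k • (x ^ k * y ^ (n - k)) := by
  rw [add_pow, sum_mul]
  refine sum_congr rfl fun k hk => ?_
  have hk : k ≤ g := Nat.lt_succ_iff.1 (mem_range.1 hk)
  rw [show n - k = (g - k) + (n - g) by omega, pow_add, nsmul_eq_mul]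
  ring

theorem Polynomial.coeff_one_add_C_mul_X_pow {R : Type*} [CommSemiring R] (a : R) (n k : ℕ) :
    ((1 + C a * X) ^ n).coeff k = a ^ k * n.choose k := by
  have hcomp : (1 + C a * X) ^ n = ((1 + X) ^ n).comp (C a * X) := by
    rw [pow_comp, add_comp, one_comp, X_comp]
  rw [hcomp, comp_C_mul_X_coeff, coeff_one_add_X_pow, (Nat.cast_commute _ _).eq]

theorem Polynomial.coeff_one_add_two_mul_X_pow_mul_one_add_X_pow_eq_sum_choose_mul_choose
    {g n : ℕ} (hg : g ≤ n) (r : ℕ) :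
    ((1 + C 2 * X) ^ g * (1 + X) ^ (n - g) : ℕ[X]).coeff r
      = ∑ m ∈ range (r + 1), g.choose m * (n - m).choose (r - m) := by
  have hsplit : (1 + C 2 * X : ℕ[X]) = X + (1 + X) := by
    rw [show (C 2 : ℕ[X]) = 2 from rfl]; ring
  rw [hsplit, add_pow_mul_pow_sub _ _ hg, finsetSum_coeff]
  simp only [coeff_smul, coeff_X_pow_mul', coeff_one_add_X_pow, Nat.cast_id, smul_eq_mul]
  refine (sum_range_succ_eq_sum_range_succ_of_eq_zero fun k hk => ?_).trans
    (sum_congr rfl fun m hm => by rw [if_pos (Nat.lt_succ_iff.1 (mem_range.1 hm))])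
  rcases lt_or_ge g k with hgk | hkg
  · rw [Nat.choose_eq_zero_of_lt hgk, zero_mul]
  · rw [if_neg (by omega), mul_zero]

theorem Polynomial.coeff_one_add_two_mul_X_pow_mul_one_add_X_pow (g s r : ℕ) :
    ((1 + C 2 * X) ^ g * (1 + X) ^ s : ℕ[X]).coeff r
      = ∑ m ∈ range (r + 1), 2 ^ m * g.choose m * s.choose (r - m) := by
  rw [coeff_mul, Nat.sum_antidiagonal_eq_sum_range_succ_mk]
  simp only [coeff_one_add_C_mul_X_pow, coeff_one_add_X_pow, Nat.cast_id]

theorem dJ_double_points_identity (g r d : ℕ) (h : r + g ≤ d) :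
    ∑ m ∈ Finset.range (r + 1), Nat.choose g m * Nat.choose (d - r - m) (r - m)
      = ∑ m ∈ Finset.range (r + 1), 2 ^ m * Nat.choose g m * Nat.choose (d - r - g) (r - m) := by
  rw [← coeff_one_add_two_mul_X_pow_mul_one_add_X_pow_eq_sum_choose_mul_choose (by omega),
    coeff_one_add_two_mul_X_pow_mul_one_add_X_pow]
end

section
/- Let e ≥ 1, let g ≥ e + 1 be an integer, and let a₁,…,a_e be rational numbers. Define the de Jonquières bracket [a₁⋯a_e] := a₁⋯a_e · (g!/(g−e−1)!) · ∑_{j=0}^{e} (−1)^j · σ_{e−j}(a₁,…,a_e) / (g−e+j), where σ_k denotes the k-th elementary symmetric polynomial (σ₀ = 1). Then [a₁⋯a_e] = ∑_{S ⊆ {1,…,e}} (g)_{|S|} · (e−g)_{e−|S|} · ∏_{i∈S} a_i² · ∏_{i∉S} a_i, where (x)_k = x(x−1)⋯(x−k+1) is the falling factorial (here evaluated at the possibly negative integer e−g). -/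
open Finset

/-- The falling factorial `x(x-1)⋯(x-k+1)` of a rational number. -/
def fallQ (x : ℚ) (k : ℕ) : ℚ := ∏ j ∈ Finset.range k, (x - j)

/-- The `k`-th elementary symmetric function of `a₁,…,a_e`. -/
def esymmQ (e : ℕ) (a : Fin e → ℚ) (k : ℕ) : ℚ :=
  ∑ S ∈ Finset.univ.powersetCard k, ∏ i ∈ S, a i

/-!
Both sides are `a₁⋯a_e` times a combination of the `σ_k`. On the right,
`∏_{i∈S} a_i² ∏_{i∉S} a_i = ∏_{i∈S} a_i · ∏_i a_i`, so grouping subsets by size gives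
`∏_i a_i · ∑_k (g)_k (e-g)_{e-k} σ_k`. Since `e - g = -c - 1` with `c = g - e - 1 ≥ 0`, the falling
factorial `(e-g)_{e-k}` is `(-1)^{e-k}` times the rising factorial `(g-k-1)!/c!`, whence
`(g)_k (e-g)_{e-k} = (-1)^{e-k} g! / ((g-e-1)! (g-k))`: the coefficient of `σ_k` in de Jonquières'
formula after the substitution `j = e - k`.
-/

lemma fallQ_eq_eval_descPochhammer (x : ℚ) (k : ℕ) : fallQ x k = (descPochhammer ℚ k).eval x :=
  (descPochhammer_eval_eq_prod_range k x).symm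

lemma fallQ_natCast (n k : ℕ) : fallQ n k = n.descFactorial k := by
  rw [fallQ_eq_eval_descPochhammer, descPochhammer_eval_eq_descFactorial]

lemma fallQ_neg_natCast_sub_one (c m : ℕ) :
    fallQ (-c - 1) m = (-1) ^ m * (c + 1).ascFactorial m := by
  have h := ascPochhammer_eval_neg_eq_descPochhammer ℚ (-c - 1 : ℚ) m
  rw [neg_sub, sub_neg_eq_add, add_comm, ← Nat.cast_add_one,
    ascPochhammer_nat_eq_natCast_ascFactorial] at h
  rw [fallQ_eq_eval_descPochhammer, h, ← mul_assoc, ← mul_pow, neg_one_mul, neg_neg, one_pow,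
    one_mul]

lemma fallQ_mul_fallQ_sub {e g k : ℕ} (hk : k ≤ e) (hg : e + 1 ≤ g) :
    fallQ g k * fallQ ((e : ℚ) - g) (e - k)
      = (-1) ^ (e - k) * ((g.factorial : ℚ) / ((g - e - 1).factorial : ℚ)) / ((g : ℚ) - k) := by
  set c := g - e - 1
  have hc : (e : ℚ) - g = -c - 1 := by
    rw [show c = g - (e + 1) by omega, Nat.cast_sub hg]; push_cast; ring
  have hdesc : ((g - k).factorial : ℚ) * g.descFactorial k = g.factorial := by
    exact_mod_cast Nat.factorial_mul_descFactorial (by omega)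
  have hasc : (c.factorial : ℚ) * (c + 1).ascFactorial (e - k) = (g - k - 1).factorial := by
    rw [show g - k - 1 = c + (e - k) by omega]
    exact_mod_cast Nat.factorial_mul_ascFactorial c (e - k)
  have hsucc : ((g - k).factorial : ℚ) = ((g : ℚ) - k) * (g - k - 1).factorial := by
    rw [← Nat.cast_sub (by omega), ← Nat.cast_mul, Nat.mul_factorial_pred (by omega)]
  have hgk : (g : ℚ) - k ≠ 0 := by
    rw [sub_ne_zero]; exact_mod_cast (by omega : g ≠ k)
  rw [hc, fallQ_natCast, fallQ_neg_natCast_sub_one, eq_div_iff hgk, ← mul_div_assoc,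
    eq_div_iff (by positivity)]
  linear_combination (-1 : ℚ) ^ (e - k) * (g.descFactorial k * ((g : ℚ) - k) * hasc
    - hsucc * g.descFactorial k + hdesc)

lemma sum_range_reflect_div (e : ℕ) (x : ℚ) (h : ℕ → ℚ) :
    ∑ j ∈ range (e + 1), (-1) ^ j * h (e - j) / (x - e + j)
      = ∑ k ∈ range (e + 1), (-1) ^ (e - k) * h k / (x - k) := by
  rw [← sum_range_reflect]
  refine sum_congr rfl fun k hk => ?_
  have hke : k ≤ e := Nat.lt_succ_iff.1 (mem_range.1 hk)
  rw [add_tsub_cancel_right, Nat.sub_sub_self hke, Nat.cast_sub hke]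
  ring

lemma sum_card_mul_prod_eq_sum_esymmQ (e : ℕ) (a : Fin e → ℚ) (f : ℕ → ℚ) :
    ∑ S : Finset (Fin e), f S.card * ∏ i ∈ S, a i
      = ∑ k ∈ range (e + 1), f k * esymmQ e a k := by
  rw [← powerset_univ, powerset_card_biUnion, sum_biUnion
    (fun i _ j _ hij => pairwise_disjoint_powersetCard _ hij), card_univ, Fintype.card_fin]
  refine sum_congr rfl fun k _ => ?_
  rw [esymmQ, mul_sum]
  exact sum_congr rfl fun S hS => by rw [mem_powersetCard_univ.1 hS]

lemma prod_sq_mul_prod_compl {ι M : Type*} [Fintype ι] [DecidableEq ι] [CommMonoid M]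
    (s : Finset ι) (a : ι → M) :
    (∏ i ∈ s, a i ^ 2) * ∏ i ∈ sᶜ, a i = (∏ i ∈ s, a i) * ∏ i, a i := by
  rw [prod_pow, sq, mul_assoc, prod_mul_prod_compl]

theorem dJ_bracket_eq_general (e g : ℕ) (hg : e + 1 ≤ g) (a : Fin e → ℚ) :
    (∏ i, a i) * ((g.factorial : ℚ) / ((g - e - 1).factorial : ℚ)) *
        (∑ j ∈ Finset.range (e + 1),
          (-1 : ℚ) ^ j * esymmQ e a (e - j) / ((g : ℚ) - e + j))
      = ∑ S : Finset (Fin e),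
          fallQ (g : ℚ) S.card * fallQ ((e : ℚ) - g) (e - S.card) *
            (∏ i ∈ S, (a i) ^ 2) * (∏ i ∈ Sᶜ, a i) := by
  have hcoeff : ∀ k ∈ range (e + 1),
      (∏ i, a i) * ((g.factorial : ℚ) / ((g - e - 1).factorial : ℚ)) *
          ((-1) ^ (e - k) * esymmQ e a k / ((g : ℚ) - k))
        = (fallQ g k * fallQ ((e : ℚ) - g) (e - k) * (∏ i, a i)) * esymmQ e a k := by
    intro k hk
    rw [fallQ_mul_fallQ_sub (Nat.lt_succ_iff.1 (mem_range.1 hk)) hg]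
    ring
  simp only [mul_assoc _ (∏ i ∈ _, a i ^ 2), prod_sq_mul_prod_compl]
  calc _ = ∑ k ∈ range (e + 1),
        (fallQ g k * fallQ ((e : ℚ) - g) (e - k) * (∏ i, a i)) * esymmQ e a k := by
        rw [sum_range_reflect_div, mul_sum, sum_congr rfl hcoeff]
    _ = _ := by
        rw [← sum_card_mul_prod_eq_sum_esymmQ]
        exact sum_congr rfl fun S _ => by ring

/-- De Jonquières' classical formula equals the Porteous-style sum over subsets. -/
theorem dJ_bracket_eq (e g : ℕ) (he : 1 ≤ e) (hg : e + 1 ≤ g) (a : Fin e → ℚ) :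
    (∏ i, a i) * ((g.factorial : ℚ) / ((g - e - 1).factorial : ℚ)) *
        (∑ j ∈ Finset.range (e + 1),
          (-1 : ℚ) ^ j * esymmQ e a (e - j) / ((g : ℚ) - e + j))
      = ∑ S : Finset (Fin e),
          fallQ (g : ℚ) S.card * fallQ ((e : ℚ) - g) (e - S.card) *
            (∏ i ∈ S, (a i) ^ 2) * (∏ i ∈ Sᶜ, a i) :=
  dJ_bracket_eq_general e g hg a
end

section
/- Let e ≥ 1 and g ≥ e + 1 be integers and let a₁,…,a_e be integers. Then the rational number [a₁⋯a_e] := a₁⋯a_e · (g!/(g−e−1)!) · ∑_{j=0}^{e} (−1)^j σ_{e−j}(a₁,…,a_e)/(g−e+j) is an integer. -/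
/-!
Only the factor `g! / ((g - e - 1)! (g - e + j))` of each summand is not visibly integral, and it is:
with `k = g - e + j` we have `g - e - 1 < k ≤ g`, so `(g - e - 1)! · k` divides `(k - 1)! · k = k!`,
which divides `g!`.
-/

open Finset Nat

theorem factorial_mul_dvd_factorial_of_lt_of_le {m k n : ℕ} (hmk : m < k) (hkn : k ≤ n) :
    m ! * k ∣ n ! :=
  calc m ! * k ∣ (k - 1)! * k := mul_dvd_mul_right (factorial_dvd_factorial (by omega)) k
    _ = k ! := by rw [mul_comm, mul_factorial_pred (by omega)]
    _ ∣ n ! := factorial_dvd_factorial hkn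

theorem cast_factorial_div_factorial_div {K : Type*} [Field K] [CharZero K] {m k n : ℕ}
    (hmk : m < k) (hkn : k ≤ n) :
    (n ! : K) / m ! / k = ((n ! / (m ! * k) : ℕ) : K) := by
  have hk : k ≠ 0 := by omega
  rw [Nat.cast_div (factorial_mul_dvd_factorial_of_lt_of_le hmk hkn)
      (by simpa using ⟨factorial_ne_zero m, hk⟩),
    Nat.cast_mul, div_div]

theorem dJ_bracket_integral_general (e g : ℕ) (hg : e + 1 ≤ g) (a : Fin e → ℤ) :
    ∃ n : ℤ,
      ((∏ i, a i : ℤ) : ℚ) * ((g.factorial : ℚ) / ((g - e - 1).factorial : ℚ)) *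
          (∑ j ∈ Finset.range (e + 1),
            (-1 : ℚ) ^ j *
              ((∑ S ∈ Finset.univ.powersetCard (e - j), ∏ i ∈ S, a i : ℤ) : ℚ) /
              ((g : ℚ) - e + j))
        = (n : ℚ) := by
  refine ⟨∑ j ∈ range (e + 1), (∏ i, a i) * (-1) ^ j *
      (∑ S ∈ univ.powersetCard (e - j), ∏ i ∈ S, a i) *
      ((g ! / ((g - e - 1)! * (g - e + j)) : ℕ) : ℤ), ?_⟩
  rw [mul_sum, Int.cast_sum]
  refine sum_congr rfl fun j hj => ?_
  have hj : j < e + 1 := mem_range.mp hj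
  have hk : ((g : ℚ) - e + j) = ((g - e + j : ℕ) : ℚ) := by
    push_cast [Nat.cast_sub (by omega : e ≤ g)]; ring
  rw [hk, Int.cast_mul, Int.cast_natCast,
    ← cast_factorial_div_factorial_div (by omega : g - e - 1 < g - e + j) (by omega)]
  push_cast
  ring

/-- The de Jonquières bracket of integers is an integer. -/
theorem dJ_bracket_integral (e g : ℕ) (he : 1 ≤ e) (hg : e + 1 ≤ g) (a : Fin e → ℤ) :
    ∃ n : ℤ,
      ((∏ i, a i : ℤ) : ℚ) * ((g.factorial : ℚ) / ((g - e - 1).factorial : ℚ)) *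
          (∑ j ∈ Finset.range (e + 1),
            (-1 : ℚ) ^ j *
              ((∑ S ∈ Finset.univ.powersetCard (e - j), ∏ i ∈ S, a i : ℤ) : ℚ) /
              ((g : ℚ) - e + j))
        = (n : ℚ) :=
  dJ_bracket_integral_general e g hg a
end
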